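/- The polynomials S_n(x,q) defined by S_0(x,q)=1 and S_{n+1}(x,q) = (q+nx)·S_n(x,q) + x(1-2x)·∂_x S_n(x,q) satisfy: for every real q > 0 and n ≥ 2, S_n(x,q) as a polynomial in x has only real, nonpositive, simple zeros. -/

import Mathlib

open Polynomial in
/-- The polynomials `S_n(x,q)` (for a fixed value of `q`), defined by `S_0(x,q) = 1` and
`S_{n+1}(x,q) = (q + n x)·S_n(x,q) + x(1-2x)·∂_x S_n(x,q)`. -/
noncomputable def Sq (q : ℝ) : ℕ → Polynomial ℝ
  | 0 => 1
  | n + 1 =>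
      (Polynomial.C q + Polynomial.C (n : ℝ) * X) * Sq q n +
        X * (1 - 2 * X) * (Sq q n).derivative

/-!
By induction on `n`, `S_n` is a positive multiple of `∏ (x - r_i)` with `d = n / 2` distinct
negative roots `r_0 < ⋯ < r_{d-1}`. Since `S_n(r_i) = 0`, the recurrence gives
`S_{n+1}(r_i) = r_i (1 - 2 r_i) S_n'(r_i)` with `r_i (1 - 2 r_i) < 0`, and `S_n'(r_i)` alternates
in sign; together with `S_{n+1}(0) = q S_n(0) > 0` this puts a root of `S_{n+1}` in each of
`(r_i, r_{i+1})` and `(r_{d-1}, 0)`. The coefficient of `x^{d+1}` in `S_{n+1}` is `n - 2d` times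
the leading coefficient of `S_n`: for even `n` the degree does not grow and these are all the
roots; for odd `n` it grows by one, and the last root lies left of `r_0` (of `0` if `d = 0`),
where the sign of `S_{n+1}` at `-∞` is opposite to its sign there.
-/

open Polynomial Finset

theorem Fin.strictMono_snoc_of_lt {α : Type*} [Preorder α] {n : ℕ} {f : Fin n → α} {a : α}
    (hf : StrictMono f) (ha : ∀ i, f i < a) : StrictMono (Fin.snoc f a : Fin (n + 1) → α) := by
  intro i j hij
  induction j using Fin.lastCases with
  | last =>
    obtain ⟨i, rfl⟩ := Fin.exists_castSucc_eq.mpr (Fin.ne_last_of_lt hij)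
    simpa using ha i
  | cast j =>
    obtain ⟨i, rfl⟩ :=
      Fin.exists_castSucc_eq.mpr (Fin.ne_last_of_lt (hij.trans (Fin.castSucc_lt_last j)))
    simpa using hf (Fin.castSucc_lt_castSucc_iff.mp hij)

section Factorization

variable {R : Type*} [CommRing R]

theorem eval_derivative_C_mul_prod_X_sub_C {d : ℕ} (l : R) (r : Fin d → R) (i : Fin d) :
    (C l * ∏ j, (X - C (r j))).derivative.eval (r i) =
      l * ∏ j ∈ univ.erase i, (r i - r j) := by
  rw [← mul_prod_erase _ _ (mem_univ i), mul_left_comm, derivative_mul, derivative_X_sub_C]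
  simp [eval_prod]

theorem eq_C_leadingCoeff_mul_prod_of_eval_eq_zero [IsDomain R] {p : R[X]} {d : ℕ} (hp : p ≠ 0)
    (hdeg : p.natDegree ≤ d) {s : Fin d → R} (hs : Function.Injective s)
    (hroot : ∀ i, p.eval (s i) = 0) : p = C p.leadingCoeff * ∏ i, (X - C (s i)) := by
  set m : Multiset R := univ.val.map s
  have hm : m ≤ p.roots := (Multiset.le_iff_subset (univ.nodup.map hs)).mpr fun x hx => by
    obtain ⟨i, -, rfl⟩ := Multiset.mem_map.mp hx
    exact (mem_roots hp).mpr (hroot i)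
  have hcard : Multiset.card p.roots ≤ Multiset.card m := by
    simpa [m] using (card_roots' p).trans hdeg
  have hroots : p.roots = m := (Multiset.eq_of_le_of_card_le hm hcard).symm
  have hsplit : Multiset.card p.roots = p.natDegree :=
    le_antisymm (card_roots' p) (by simpa [hroots, m] using hdeg)
  conv_lhs => rw [← C_leadingCoeff_mul_prod_multiset_X_sub_C hsplit, hroots]
  rw [Multiset.map_map, prod_eq_multiset_prod]
  rfl

end Factorization

theorem neg_one_pow_mul_prod_erase_sub_pos {R : Type*} [CommRing R] [LinearOrder R]
    [IsStrictOrderedRing R] {m : ℕ} {r : Fin m → R} (hr : StrictMono r) (i : Fin m) :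
    0 < (-1) ^ (m - 1 - i : ℕ) * ∏ j ∈ univ.erase i, (r i - r j) := by
  have habs : ∀ j ∈ univ.erase i, r i - r j = (if i < j then -1 else 1) * |r i - r j| := by
    intro j hj
    rcases lt_or_gt_of_ne (ne_of_mem_erase hj) with h | h
    · simp [h.not_gt, abs_of_pos (sub_pos.mpr (hr h))]
    · simp [h, abs_of_neg (sub_neg.mpr (hr h))]
  have hcard : #{j ∈ univ.erase i | i < j} = m - 1 - i := by
    rw [← Fin.card_Ioi]
    congr 1
    ext j
    simpa using fun h : i < j => h.ne'
  rw [prod_congr rfl habs, prod_mul_distrib, prod_ite, prod_const, prod_const_one, hcard, mul_one,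
    ← mul_assoc, ← mul_pow, neg_one_mul, neg_neg, one_pow, one_mul]
  exact prod_pos fun j hj =>
    abs_pos.mpr (sub_ne_zero.mpr (hr.injective.ne (ne_of_mem_erase hj).symm))

theorem exists_mem_Ioo_eval_eq_zero {p : ℝ[X]} {a b : ℝ} (hab : a < b)
    (h : p.eval a * p.eval b < 0) : ∃ x ∈ Set.Ioo a b, p.eval x = 0 := by
  have hc : ContinuousOn (fun x => p.eval x) (Set.Icc a b) := p.continuous.continuousOn
  rcases mul_neg_iff.mp h with ⟨ha, hb⟩ | ⟨ha, hb⟩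
  · exact intermediate_value_Ioo' hab.le hc ⟨hb, ha⟩
  · exact intermediate_value_Ioo hab.le hc ⟨ha, hb⟩

theorem exists_strictMono_roots_of_alternating {p : ℝ[X]} {D : ℕ} {t : Fin (D + 1) → ℝ}
    (ht : StrictMono t) (hsign : ∀ k : Fin D, p.eval (t k.castSucc) * p.eval (t k.succ) < 0) :
    ∃ s : Fin D → ℝ, StrictMono s ∧ (∀ k, t k.castSucc < s k ∧ s k < t k.succ) ∧
      ∀ k, p.eval (s k) = 0 := by
  choose s hs hroot using fun k =>
    exists_mem_Ioo_eval_eq_zero (ht (Fin.castSucc_lt_succ (i := k))) (hsign k)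
  refine ⟨s, fun i j hij => ?_, hs, hroot⟩
  calc s i < t i.succ := (hs i).2
    _ ≤ t j.castSucc := ht.monotone (Fin.succ_le_castSucc_iff.mpr hij)
    _ < s j := (hs j).1

theorem exists_lt_neg_one_pow_mul_eval_pos {p : ℝ[X]} (hdeg : 0 < p.natDegree)
    (hlc : 0 < p.leadingCoeff) (a : ℝ) : ∃ b < a, 0 < (-1) ^ p.natDegree * p.eval b := by
  set U : ℝ[X] := C ((-1) ^ p.natDegree) * p.comp (-X)
  have hsign : ((-1) ^ p.natDegree : ℝ) ≠ 0 := pow_ne_zero _ (by norm_num)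
  have hUlc : U.leadingCoeff = p.leadingCoeff := by
    rw [leadingCoeff_mul, leadingCoeff_C, comp_neg_X_leadingCoeff_eq, ← mul_assoc, ← mul_pow]
    simp
  have hUdeg : 0 < U.degree := by
    rwa [degree_C_mul hsign, degree_comp_neg_X, ← natDegree_pos_iff_degree_pos]
  obtain ⟨x, hxpos, hxa⟩ := ((tendsto_atTop_of_leadingCoeff_nonneg U hUdeg
    (hUlc ▸ hlc.le)).eventually_gt_atTop 0 |>.and (Filter.eventually_gt_atTop (-a))).exists
  exact ⟨-x, by linarith, by simpa [U] using hxpos⟩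

theorem coeff_X_mul_derivative {R : Type*} [Semiring R] (p : R[X]) (N : ℕ) :
    (X * p.derivative).coeff N = p.coeff N * N := by
  cases N with
  | zero => simp
  | succ N => simp [coeff_derivative]

def HasSimpleNegRoots (d : ℕ) (p : ℝ[X]) : Prop :=
  ∃ (l : ℝ) (r : Fin d → ℝ), 0 < l ∧ StrictMono r ∧ (∀ i, r i < 0) ∧
    p = C l * ∏ i, (X - C (r i))

namespace HasSimpleNegRoots

variable {d : ℕ} {p : ℝ[X]}

theorem natDegree_le (h : HasSimpleNegRoots d p) : p.natDegree ≤ d := by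
  obtain ⟨l, r, hl, -, -, rfl⟩ := h
  simp [natDegree_C_mul hl.ne']

theorem coeff_pos (h : HasSimpleNegRoots d p) : 0 < p.coeff d := by
  obtain ⟨l, r, hl, -, -, rfl⟩ := h
  have hdeg : (C l * ∏ i, (X - C (r i))).natDegree = d := by simp [natDegree_C_mul hl.ne']
  have hlc : (C l * ∏ i, (X - C (r i))).leadingCoeff = l := by
    rw [leadingCoeff_mul, leadingCoeff_C,
      (monic_prod_of_monic _ _ fun i _ => monic_X_sub_C (r i)).leadingCoeff, mul_one]
  rw [leadingCoeff, hdeg] at hlc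
  rwa [hlc]

theorem eval_zero_pos (h : HasSimpleNegRoots d p) : 0 < p.eval 0 := by
  obtain ⟨l, r, hl, -, hneg, rfl⟩ := h
  simpa [eval_prod] using mul_pos hl (prod_pos fun i _ => neg_pos.mpr (hneg i))

theorem of_alternating (hdeg : p.natDegree ≤ d) {t : Fin (d + 1) → ℝ} (ht : StrictMono t)
    (hlast : t (Fin.last d) = 0)
    (hsign : ∀ k : Fin (d + 1), 0 < (-1) ^ (d - k : ℕ) * p.eval (t k)) :
    HasSimpleNegRoots d p := by
  have hp0 : 0 < p.eval 0 := by simpa [hlast] using hsign (Fin.last d)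
  have hp : p ≠ 0 := by rintro rfl; simp at hp0
  have hchange (k : Fin d) : p.eval (t k.castSucc) * p.eval (t k.succ) < 0 := by
    have hpow : (-1 : ℝ) ^ (d - k.castSucc : ℕ) = -(-1) ^ (d - k.succ : ℕ) := by
      rw [show d - k.castSucc = d - k.succ + 1 by simp; omega, pow_succ, mul_neg_one]
    have hsq : ((-1 : ℝ) ^ (d - k.succ : ℕ)) ^ 2 = 1 := by
      rw [← pow_mul, mul_comm, pow_mul, neg_one_sq, one_pow]
    have hcast := hsign k.castSucc
    rw [hpow] at hcast
    calc p.eval (t k.castSucc) * p.eval (t k.succ)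
        = -((-(-1) ^ (d - k.succ : ℕ) * p.eval (t k.castSucc)) *
            ((-1) ^ (d - k.succ : ℕ) * p.eval (t k.succ))) := by
          linear_combination (-(p.eval (t k.castSucc) * p.eval (t k.succ))) * hsq
      _ < 0 := neg_neg_of_pos (mul_pos hcast (hsign k.succ))
  obtain ⟨s, hs, hst, hroot⟩ := exists_strictMono_roots_of_alternating ht hchange
  have hneg (k : Fin d) : s k < 0 := (hst k).2.trans_le (hlast ▸ ht.monotone (Fin.le_last _))
  have hfac := eq_C_leadingCoeff_mul_prod_of_eval_eq_zero hp hdeg hs.injective hroot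
  refine ⟨p.leadingCoeff, s, ?_, hs, hneg, hfac⟩
  have hprod : 0 < ∏ i, (0 - s i) := prod_pos fun i _ => by linarith [hneg i]
  have heval : p.eval 0 = p.leadingCoeff * ∏ i, (0 - s i) := by
    conv_lhs => rw [hfac]
    simp [eval_prod]
  exact (pos_iff_pos_of_mul_pos (heval ▸ hp0)).mpr hprod

theorem exists_nonpos_eq_ofReal_of_aeval_eq_zero (h : HasSimpleNegRoots d p) {z : ℂ}
    (hz : aeval z p = 0) : ∃ x : ℝ, x ≤ 0 ∧ z = x := by
  obtain ⟨l, r, hl, -, hneg, rfl⟩ := h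
  simp only [map_mul, map_prod, map_sub, aeval_C, aeval_X, Complex.coe_algebraMap,
    mul_eq_zero, Complex.ofReal_eq_zero, hl.ne', false_or, prod_eq_zero_iff, mem_univ,
    true_and, sub_eq_zero] at hz
  obtain ⟨i, rfl⟩ := hz
  exact ⟨r i, (hneg i).le, rfl⟩

theorem rootMultiplicity_le_one (h : HasSimpleNegRoots d p) (x : ℝ) :
    p.rootMultiplicity x ≤ 1 := by
  obtain ⟨l, r, hl, hr, -, rfl⟩ := h
  have hprod : ∏ i, (X - C (r i)) = ((univ.val.map r).map fun a => X - C a).prod := by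
    rw [Multiset.map_map, prod_eq_multiset_prod]
    rfl
  rw [← count_roots, roots_C_mul _ hl.ne', hprod, roots_multiset_prod_X_sub_C]
  exact Multiset.nodup_iff_count_le_one.mp (univ.nodup.map hr.injective) x

end HasSimpleNegRoots

section Sq

variable (q : ℝ) (n : ℕ)

theorem Sq_succ :
    Sq q (n + 1) = C q * Sq q n + C (n : ℝ) * (X * Sq q n) + X * (Sq q n).derivative
      - C 2 * (X * (X * (Sq q n).derivative)) := by
  rw [Sq, map_ofNat C 2]
  ring

theorem coeff_Sq_succ_succ (N : ℕ) :
    (Sq q (n + 1)).coeff (N + 1) =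
      (q + N + 1) * (Sq q n).coeff (N + 1) + (n - 2 * N) * (Sq q n).coeff N := by
  simp only [Sq_succ, coeff_sub, coeff_add, coeff_C_mul, coeff_X_mul, coeff_derivative,
    coeff_X_mul_derivative]
  ring

theorem eval_zero_Sq_succ : (Sq q (n + 1)).eval 0 = q * (Sq q n).eval 0 := by
  simp [Sq_succ]

variable {q n}

theorem natDegree_Sq_succ_le {d : ℕ} (h : (Sq q n).natDegree ≤ d) :
    (Sq q (n + 1)).natDegree ≤ d + 1 := by
  refine natDegree_le_iff_coeff_eq_zero.mpr fun N hN => ?_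
  obtain ⟨M, rfl⟩ : ∃ M, N = M + 1 := ⟨N - 1, by omega⟩
  rw [coeff_Sq_succ_succ, coeff_eq_zero_of_natDegree_lt (by omega),
    coeff_eq_zero_of_natDegree_lt (by omega)]
  ring

theorem eval_Sq_succ_of_eval_eq_zero {x : ℝ} (hx : (Sq q n).eval x = 0) :
    (Sq q (n + 1)).eval x = x * (1 - 2 * x) * (Sq q n).derivative.eval x := by
  simp [Sq_succ, hx]
  ring

theorem HasSimpleNegRoots.exists_alternating_Sq_succ {d : ℕ} (hq : 0 < q)
    (h : HasSimpleNegRoots d (Sq q n)) :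
    ∃ t : Fin (d + 1) → ℝ, StrictMono t ∧ t (Fin.last d) = 0 ∧
      ∀ k : Fin (d + 1), 0 < (-1) ^ (d - k : ℕ) * (Sq q (n + 1)).eval (t k) := by
  have hT0 : 0 < (Sq q (n + 1)).eval 0 := by
    rw [eval_zero_Sq_succ]
    exact mul_pos hq h.eval_zero_pos
  obtain ⟨l, r, hl, hr, hneg, hS⟩ := h
  refine ⟨Fin.snoc r 0, Fin.strictMono_snoc_of_lt hr hneg, by simp, fun k => ?_⟩
  induction k using Fin.lastCases with
  | last => simpa using hT0
  | cast i =>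
    have hroot : (Sq q n).eval (r i) = 0 := by
      simp [hS, eval_prod, prod_eq_zero (mem_univ i)]
    have hpow : (-1 : ℝ) ^ (d - i.castSucc : ℕ) = -(-1) ^ (d - 1 - i : ℕ) := by
      rw [Fin.val_castSucc, show d - i = d - 1 - i + 1 by omega, pow_succ, mul_neg_one]
    have hfactor : 0 < -(r i * (1 - 2 * r i)) := by nlinarith [hneg i]
    rw [Fin.snoc_castSucc, eval_Sq_succ_of_eval_eq_zero hroot, hS,
      eval_derivative_C_mul_prod_X_sub_C, hpow]
    exact (mul_pos (mul_pos hfactor hl) (neg_one_pow_mul_prod_erase_sub_pos hr i)).trans_eq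
      (by ring)

theorem HasSimpleNegRoots.Sq_succ (hq : 0 < q) (h : HasSimpleNegRoots (n / 2) (Sq q n)) :
    HasSimpleNegRoots ((n + 1) / 2) (Sq q (n + 1)) := by
  have hdeg := natDegree_Sq_succ_le h.natDegree_le
  have htop := coeff_Sq_succ_succ q n (n / 2)
  rcases Nat.even_or_odd' n with ⟨m, rfl | rfl⟩
  · rw [show 2 * m / 2 = m by omega] at h hdeg htop
    rw [show (2 * m + 1) / 2 = m by omega]
    obtain ⟨t, ht, hlast, hsign⟩ := h.exists_alternating_Sq_succ hq
    have htop0 : (Sq q (2 * m + 1)).coeff (m + 1) = 0 := by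
      rw [htop, coeff_eq_zero_of_natDegree_lt (by linarith [h.natDegree_le])]
      push_cast
      ring
    exact .of_alternating (by simpa using natDegree_le_pred hdeg htop0) ht hlast hsign
  · rw [show (2 * m + 1) / 2 = m by omega] at h hdeg htop
    rw [show (2 * m + 1 + 1) / 2 = m + 1 by omega]
    obtain ⟨t, ht, hlast, hsign⟩ := h.exists_alternating_Sq_succ hq
    -- the top coefficient of `S_{2m+2}` is that of `S_{2m+1}`, hence positive
    have htop_pos : 0 < (Sq q (2 * m + 1 + 1)).coeff (m + 1) := by
      rw [htop, coeff_eq_zero_of_natDegree_lt (by linarith [h.natDegree_le])]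
      push_cast
      linarith [h.coeff_pos]
    have hdeg_eq := natDegree_eq_of_le_of_coeff_ne_zero hdeg htop_pos.ne'
    obtain ⟨B, hB, hBsign⟩ := exists_lt_neg_one_pow_mul_eval_pos (by omega)
      (show 0 < (Sq q (2 * m + 1 + 1)).leadingCoeff by rwa [leadingCoeff, hdeg_eq]) (t 0)
    refine .of_alternating hdeg (t := Fin.cons B t)
      (Fin.strictMono_cons.mpr ⟨fun j => hB.trans_le (ht.monotone (Fin.zero_le j)), ht⟩)
      (by simpa [← Fin.succ_last] using hlast) (Fin.cases ?_ fun k => ?_)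
    · simpa [hdeg_eq] using hBsign
    · simpa using hsign k

end Sq

theorem hasSimpleNegRoots_Sq {q : ℝ} (hq : 0 < q) (n : ℕ) :
    HasSimpleNegRoots (n / 2) (Sq q n) := by
  induction n with
  | zero => exact ⟨1, Fin.elim0, one_pos, fun i => i.elim0, fun i => i.elim0, by simp [Sq]⟩
  | succ n ih => exact ih.Sq_succ hq

theorem stmt15_general (q : ℝ) (hq : 0 < q) (n : ℕ) :
    (∀ z : ℂ, Polynomial.aeval z (Sq q n) = 0 → ∃ r : ℝ, r ≤ 0 ∧ z = (r : ℂ)) ∧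
    (∀ r : ℝ, (Sq q n).rootMultiplicity r ≤ 1) :=
  ⟨fun _ hz => (hasSimpleNegRoots_Sq hq n).exists_nonpos_eq_ofReal_of_aeval_eq_zero hz,
    (hasSimpleNegRoots_Sq hq n).rootMultiplicity_le_one⟩

/-- For every real `q > 0` and `n ≥ 2`, `S_n(x,q)` has only real, nonpositive and
simple zeros. -/
theorem stmt15 (q : ℝ) (hq : 0 < q) (n : ℕ) (hn : 2 ≤ n) :
    (∀ z : ℂ, Polynomial.aeval z (Sq q n) = 0 → ∃ r : ℝ, r ≤ 0 ∧ z = (r : ℂ)) ∧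
    (∀ r : ℝ, (Sq q n).rootMultiplicity r ≤ 1) :=
  stmt15_general q hq n
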